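/- Let (H_n)_{n∈ℕ} be a countable family of groups and let K be the kernel of the natural surjection Ab(∏_n H_n) → ∏_n Ab(H_n). Then for every prime p, the p-length of K satisfies l_p(K) ≤ ℵ₁ (i.e., p^{ℵ₁} K is p-divisible). -/

import Mathlib

/-- The transfinite `p`-power subgroup `p^λ A`. -/
noncomputable def pPow (p : ℕ) (A : Type) [AddCommGroup A] (lam : Ordinal) : AddSubgroup A :=
  Ordinal.limitRecOn lam ⊤ (fun _ S => S.map (zsmulAddGroupHom (p : ℤ)))
    (fun o _ ih => ⨅ b : Set.Iio o, ih b.1 b.2)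

/-- The `p`-length of `A`: the least ordinal `λ` with `p^(λ+1) A = p^λ A`. -/
noncomputable def pLength (p : ℕ) (A : Type) [AddCommGroup A] : Ordinal :=
  sInf {o : Ordinal | pPow p A (o + 1) = pPow p A o}

/-- The coordinatewise abelianization map on a countable product. -/
def prodAbHom (H : ℕ → Type) [∀ n, Group (H n)] :
    (∀ n, H n) →* ∀ n, Abelianization (H n) :=
  MonoidHom.mk' (fun x n => Abelianization.of (x n)) (by intro a b; funext n; simp)

/-- The natural map `Ab(∏ₙ Hₙ) → ∏ₙ Ab(Hₙ)`. -/
def abProdToProdAb (H : ℕ → Type) [∀ n, Group (H n)] :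
    Abelianization (∀ n, H n) →* ∀ n, Abelianization (H n) :=
  Abelianization.lift (prodAbHom H)

/-! An element of `K` is the class of some `x ∈ ∏ₙ [Hₙ, Hₙ]`, and two such elements agree in `K`
iff their quotient is, uniformly in `n`, a product of boundedly many commutators. If `[x] ∈ p^γ K`
for every `γ < ω₁`, then, since `ℵ₁` has uncountable cofinality, a pigeonhole argument fixes step by
step bounds `κ j` such that for every `m` there is a chain `x = w 0, w 1, …, w m` with
`w j ≡ (w (j+1)) ^ p` modulo products of `κ j` commutators. Splicing these chains diagonally over
the countably many coordinates yields an infinite chain of `p`-th roots of `[x]` in `K`, so `[x]`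
is `p` times an element of `p^{ω₁} K`. -/

open Ordinal
open scoped Pointwise

section PPow

variable {p : ℕ} {A : Type} [AddCommGroup A]

theorem pPow_zero : pPow p A 0 = ⊤ := Ordinal.limitRecOn_zero _ _ _

theorem pPow_add_one (o : Ordinal) :
    pPow p A (o + 1) = (pPow p A o).map (zsmulAddGroupHom (p : ℤ)) :=
  Ordinal.limitRecOn_add_one _ _ _ _

theorem pPow_limit {o : Ordinal} (ho : Order.IsSuccLimit o) :
    pPow p A o = ⨅ b : Set.Iio o, pPow p A b.1 :=
  Ordinal.limitRecOn_limit _ _ _ _ ho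

theorem mem_pPow_add_one {o : Ordinal} {a : A} :
    a ∈ pPow p A (o + 1) ↔ ∃ b ∈ pPow p A o, p • b = a := by
  simp [pPow_add_one]

theorem pPow_add_one_le (o : Ordinal) : pPow p A (o + 1) ≤ pPow p A o := by
  rw [pPow_add_one]
  rintro _ ⟨b, hb, rfl⟩
  exact AddSubgroup.zsmul_mem _ hb _

theorem pPow_antitone : Antitone (pPow p A) := by
  intro β γ hβγ
  induction γ using Ordinal.limitRecOn with
  | zero => rw [nonpos_iff_eq_zero.mp hβγ]
  | add_one o ih =>
    rcases Order.le_succ_iff_eq_or_le.mp (Order.succ_eq_add_one o ▸ hβγ) with rfl | hβo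
    · rw [Order.succ_eq_add_one]
    · exact (pPow_add_one_le o).trans (ih hβo)
  | limit o ho _ =>
    rcases hβγ.eq_or_lt with rfl | hβo
    · exact le_rfl
    · rw [pPow_limit ho]
      exact iInf_le_of_le ⟨β, hβo⟩ le_rfl

theorem mem_pPow_of_forall_eq_nsmul {a : ℕ → A} (ha : ∀ i, a i = p • a (i + 1)) (γ : Ordinal) :
    a 0 ∈ pPow p A γ := by
  induction γ using Ordinal.limitRecOn generalizing a with
  | zero => simp [pPow_zero]
  | add_one o ih => exact mem_pPow_add_one.mpr ⟨a 1, ih fun i => ha (i + 1), (ha 0).symm⟩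
  | limit o ho ih =>
    rw [pPow_limit ho]
    exact AddSubgroup.mem_iInf.mpr fun b => ih b.1 b.2 ha

theorem pPow_add_one_eq_of_exists_seq {o : Ordinal}
    (h : ∀ a ∈ pPow p A o, ∃ s : ℕ → A, s 0 = a ∧ ∀ i, s i = p • s (i + 1)) :
    pPow p A (o + 1) = pPow p A o := by
  refine le_antisymm (pPow_add_one_le o) fun a ha => ?_
  obtain ⟨s, rfl, hs⟩ := h a ha
  exact mem_pPow_add_one.mpr ⟨s 1, mem_pPow_of_forall_eq_nsmul (fun i => hs (i + 1)) o, (hs 0).symm⟩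

end PPow

theorem mem_commutator_iff_exists_mem_commutatorSet_pow {G : Type*} [Group G] {g : G} :
    g ∈ commutator G ↔ ∃ k, g ∈ commutatorSet G ^ k := by
  constructor
  · intro hg
    rw [commutator_eq_closure] at hg
    induction hg using Subgroup.closure_induction'' with
    | mem g hg => exact ⟨1, by rwa [pow_one]⟩
    | inv_mem g hg =>
      obtain ⟨a, b, rfl⟩ := hg
      exact ⟨1, by rw [pow_one, commutatorElement_inv]; exact commutator_mem_commutatorSet b a⟩
    | one => exact ⟨0, by simp⟩
    | mul g h _ _ ihg ihh =>
      obtain ⟨k, hk⟩ := ihg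
      obtain ⟨l, hl⟩ := ihh
      exact ⟨k + l, by rw [pow_add]; exact Set.mul_mem_mul hk hl⟩
  · rintro ⟨k, hk⟩
    rw [commutator_eq_closure, ← SetLike.mem_coe,
      ← Set.pow_mul_subgroupClosure ⟨1, one_mem_commutatorSet G⟩ k, ← mul_one g]
    exact Set.mul_mem_mul hk (one_mem _)

theorem mem_commutatorSet_pi_pow {ι : Type*} {H : ι → Type*} [∀ i, Group (H i)]
    {g : ∀ i, H i} {k : ℕ} :
    g ∈ commutatorSet (∀ i, H i) ^ k ↔ ∀ i, g i ∈ commutatorSet (H i) ^ k := by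
  induction k generalizing g with
  | zero => simp [funext_iff]
  | succ k ih =>
    simp only [pow_succ, Set.mem_mul, mem_commutatorSet_iff]
    constructor
    · rintro ⟨a, ha, _, ⟨x, y, rfl⟩, rfl⟩ i
      exact ⟨a i, ih.mp ha i, _, ⟨x i, y i, rfl⟩, rfl⟩
    · intro h
      choose a ha b hb hab using h
      choose x y hxy using hb
      exact ⟨a, ih.mpr ha, b, ⟨x, y, funext hxy⟩, funext hab⟩

section Abelianization

variable {G : Type*} [Group G]

theorem Abelianization.of_eq_of_iff_exists_mem_commutatorSet_pow {a b : G} :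
    of a = of b ↔ ∃ k, a / b ∈ commutatorSet G ^ k := by
  rw [← div_eq_one, ← map_div, ← MonoidHom.mem_ker, ker_of,
    mem_commutator_iff_exists_mem_commutatorSet_pow]

variable (S : Subgroup (Abelianization G))

def classOf (y : S.comap Abelianization.of) : Additive S :=
  Additive.ofMul (Abelianization.of.subgroupComap S y)

theorem classOf_surjective : Function.Surjective (classOf S) := fun a =>
  MonoidHom.subgroupComap_surjective_of_surjective _ S QuotientGroup.mk_surjective
    (Additive.toMul a)

variable {S}

theorem classOf_eq_nsmul_iff {a b : S.comap Abelianization.of} {p : ℕ} :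
    classOf S a = p • classOf S b ↔ ∃ k, (a : G) / (b : G) ^ p ∈ commutatorSet G ^ k := by
  rw [classOf, classOf, ← ofMul_pow, ← map_pow, EmbeddingLike.apply_eq_iff_eq, Subtype.ext_iff]
  exact Abelianization.of_eq_of_iff_exists_mem_commutatorSet_pow

end Abelianization

theorem exists_nat_forall_lt_omega_one {P : Ordinal → ℕ → Prop}
    (hP : ∀ k, Antitone fun γ => P γ k) (h : ∀ γ < ω₁, ∃ k, P γ k) :
    ∃ k, ∀ γ < ω₁, P γ k := by
  by_contra! hcon
  choose γ hγ hPγ using hcon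
  obtain ⟨k, hk⟩ := h (⨆ k, γ k) (Ordinal.iSup_lt_omega_one hγ)
  exact hPγ k (hP k (Ordinal.le_iSup γ k) hk)

section Chains

universe u

variable {G : Type} [Group G] (p : ℕ) {S : Subgroup (Abelianization G)}

variable (S) in
def MeetsPPowBelowOmegaOne (T : Set (S.comap Abelianization.of)) : Prop :=
  ∀ γ : Ordinal.{u}, γ < ω₁ → ∃ y ∈ T, classOf S y ∈ pPow p (Additive S) γ

def pthRootsUpTo (k : ℕ) (T : Set (S.comap Abelianization.of)) : Set (S.comap Abelianization.of) :=
  {y | ∃ t ∈ T, (t : G) / (y : G) ^ p ∈ commutatorSet G ^ k}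

variable {p}

theorem MeetsPPowBelowOmegaOne.exists_pthRootsUpTo {T : Set (S.comap Abelianization.of)}
    (hT : MeetsPPowBelowOmegaOne.{u} p S T) :
    ∃ k, MeetsPPowBelowOmegaOne.{u} p S (pthRootsUpTo p k T) := by
  refine exists_nat_forall_lt_omega_one
    (fun k β γ hβγ ⟨y, hy, hyγ⟩ => ⟨y, hy, pPow_antitone hβγ hyγ⟩) fun γ hγ => ?_
  obtain ⟨t, ht, htγ⟩ := hT (γ + 1) ((Cardinal.isSuccLimit_omega 1).add_one_lt hγ)
  obtain ⟨b, hb, hpb⟩ := mem_pPow_add_one.mp htγ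
  obtain ⟨y, rfl⟩ := classOf_surjective S b
  obtain ⟨k, hk⟩ := classOf_eq_nsmul_iff.mp hpb.symm
  exact ⟨k, y, ⟨t, ht, hk⟩, hb⟩

variable (p)

noncomputable def pthRootWidth (T : Set (S.comap Abelianization.of)) : ℕ :=
  sInf {k | MeetsPPowBelowOmegaOne.{u} p S (pthRootsUpTo p k T)}

noncomputable def pthRootLevels (x : S.comap Abelianization.of) :
    ℕ → Set (S.comap Abelianization.of)
  | 0 => {x}
  | m + 1 => pthRootsUpTo p (pthRootWidth.{u} p (pthRootLevels x m)) (pthRootLevels x m)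

variable {p}

theorem MeetsPPowBelowOmegaOne.meets_pthRootLevels {x : S.comap Abelianization.of}
    (hx : MeetsPPowBelowOmegaOne.{u} p S {x}) (m : ℕ) :
    MeetsPPowBelowOmegaOne.{u} p S (pthRootLevels.{u} p x m) := by
  induction m with
  | zero => exact hx
  | succ m ih => exact Nat.sInf_mem ih.exists_pthRootsUpTo

theorem exists_chain_of_mem_pthRootLevels {x y : S.comap Abelianization.of} {m : ℕ}
    (hy : y ∈ pthRootLevels.{u} p x m) :
    ∃ w : ℕ → S.comap Abelianization.of, w 0 = x ∧ w m = y ∧ ∀ j < m,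
      (w j : G) / (w (j + 1) : G) ^ p ∈
        commutatorSet G ^ pthRootWidth.{u} p (pthRootLevels.{u} p x j) := by
  induction m generalizing y with
  | zero => exact ⟨fun _ => x, rfl, hy.symm, fun j hj => absurd hj j.not_lt_zero⟩
  | succ m ih =>
    obtain ⟨t, ht, hty⟩ := hy
    obtain ⟨w, hw0, hwm, hw⟩ := ih ht
    refine ⟨fun j => if j ≤ m then w j else y, by simpa using hw0, by simp, fun j hj => ?_⟩
    rcases (Nat.lt_succ_iff_lt_or_eq.mp hj) with hjm | rfl
    · simpa [hjm.le, Nat.succ_le_of_lt hjm] using hw j hjm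
    · simpa [hwm] using hty

theorem MeetsPPowBelowOmegaOne.exists_chains {x : S.comap Abelianization.of}
    (hx : MeetsPPowBelowOmegaOne.{u} p S {x}) :
    ∃ κ : ℕ → ℕ, ∀ m, ∃ w : ℕ → S.comap Abelianization.of,
      w 0 = x ∧ ∀ j < m, (w j : G) / (w (j + 1) : G) ^ p ∈ commutatorSet G ^ κ j := by
  refine ⟨fun j => pthRootWidth.{u} p (pthRootLevels.{u} p x j), fun m => ?_⟩
  obtain ⟨y, hy, -⟩ := hx.meets_pthRootLevels m 0 (omega_pos 1)
  obtain ⟨w, hw0, -, hw⟩ := exists_chain_of_mem_pthRootLevels hy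
  exact ⟨w, hw0, hw⟩

end Chains

section Product

universe u

variable {H : ℕ → Type} [∀ n, Group (H n)] {p : ℕ}

theorem mem_comap_ker_abProdToProdAb {g : ∀ n, H n} :
    g ∈ (abProdToProdAb H).ker.comap Abelianization.of ↔ ∀ n, g n ∈ commutator (H n) := by
  simp only [Subgroup.mem_comap, MonoidHom.mem_ker, abProdToProdAb, Abelianization.lift_apply_of,
    funext_iff]
  refine forall_congr' fun n => ?_
  rw [← Abelianization.ker_of, MonoidHom.mem_ker]
  rfl

/-- Diagonal splicing: coordinate `n` of the `i`-th term is that of the `i`-th term of the chain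
of length `n` if `i ≤ n`, and `1` otherwise. Step `i` then costs at most `κ i` commutators, except
in coordinate `i`, where the chain of length `i` ends. -/
theorem exists_infinite_chain_of_finite_chains
    {x : (abProdToProdAb H).ker.comap Abelianization.of} {κ : ℕ → ℕ}
    (h : ∀ m, ∃ w : ℕ → (abProdToProdAb H).ker.comap Abelianization.of,
      w 0 = x ∧ ∀ j < m, (w j : ∀ n, H n) / (w (j + 1) : ∀ n, H n) ^ p ∈
        commutatorSet (∀ n, H n) ^ κ j) :
    ∃ z : ℕ → (abProdToProdAb H).ker.comap Abelianization.of, z 0 = x ∧ ∀ i, ∃ k,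
      (z i : ∀ n, H n) / (z (i + 1) : ∀ n, H n) ^ p ∈ commutatorSet (∀ n, H n) ^ k := by
  choose W hW0 hW using h
  choose e he using fun i => mem_commutator_iff_exists_mem_commutatorSet_pow.mp
    (mem_comap_ker_abProdToProdAb.mp (W i i).2 i)
  classical
  let z i : (abProdToProdAb H).ker.comap Abelianization.of :=
    ⟨fun n => if i ≤ n then (W n i : ∀ n, H n) n else 1, mem_comap_ker_abProdToProdAb.mpr
      fun n => by
        split_ifs
        · exact mem_comap_ker_abProdToProdAb.mp (W n i).2 n
        · exact one_mem _⟩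
  refine ⟨z, Subtype.ext <| funext fun n => by simp [z, hW0], fun i => ⟨max (κ i) (e i), ?_⟩⟩
  rw [mem_commutatorSet_pi_pow]
  intro n
  rcases lt_trichotomy i n with hin | rfl | hni
  · simpa [z, hin.le, hin] using
      Set.pow_subset_pow_right (one_mem_commutatorSet _) (le_max_left _ _)
        (mem_commutatorSet_pi_pow.mp (hW n i hin) n)
  · simpa [z] using
      Set.pow_subset_pow_right (one_mem_commutatorSet _) (le_max_right _ _) (he i)
  · simpa [z, hni.not_ge, hni.not_gt] using
      Set.one_mem_pow (one_mem_commutatorSet (H n))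

theorem pPow_ker_abProdToProdAb_omega_one_add_one (H : ℕ → Type) [∀ n, Group (H n)] (p : ℕ) :
    pPow p (Additive (abProdToProdAb H).ker) (ω₁ + 1 : Ordinal.{u}) =
      pPow p (Additive (abProdToProdAb H).ker) (ω₁ : Ordinal.{u}) := by
  apply pPow_add_one_eq_of_exists_seq
  intro a ha
  obtain ⟨x, rfl⟩ := classOf_surjective _ a
  have hx : MeetsPPowBelowOmegaOne p _ {x} := fun γ hγ => ⟨x, rfl, pPow_antitone hγ.le ha⟩
  obtain ⟨κ, hκ⟩ := hx.exists_chains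
  obtain ⟨z, rfl, hz⟩ := exists_infinite_chain_of_finite_chains hκ
  exact ⟨fun i => classOf _ (z i), rfl, fun i => classOf_eq_nsmul_iff.mpr (hz i)⟩

end Product

theorem stmt_16_general (H : ℕ → Type) [∀ n, Group (H n)] (p : ℕ) :
    pLength p (Additive (abProdToProdAb H).ker) ≤ (Cardinal.aleph 1).ord := by
  rw [Cardinal.ord_aleph]
  exact csInf_le' (pPow_ker_abProdToProdAb_omega_one_add_one H p)

/-- For every prime `p`, the `p`-length of the kernel of `Ab(∏ₙ Hₙ) → ∏ₙ Ab(Hₙ)` is at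
most `ℵ₁`. -/
theorem stmt_16 (H : ℕ → Type) [∀ n, Group (H n)] (p : ℕ) (hp : p.Prime) :
    pLength p (Additive (abProdToProdAb H).ker) ≤ (Cardinal.aleph 1).ord :=
  stmt_16_general H p
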